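/- Let H, K be bialgebras over a commutative ring k, C a (K,H)-bimodule coalgebra. Then the cokernel functor E = C ⊗_H − : H-Mod → K-Mod is op-monoidal with structure maps ψ_{V,W} : C ⊗_H (V ⊗ W) → (C ⊗_H V) ⊗ (C ⊗_H W), c ⊗_H (v ⊗ w) ↦ (c_{(1)} ⊗_H v) ⊗ (c_{(2)} ⊗_H w), and ψ₀ : C ⊗_H k → k, c ⊗_H λ ↦ ε(c)λ; i.e., these maps are well-defined K-linear natural transformations satisfying the op-monoidal coherence conditions. -/

import Mathlib

open TensorProduct Coalgebra

variable {k : Type} [CommRing k]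

/-- The `H`-balancing submodule of `C ⊗ₖ V` relative to a right `H`-action `actR` on `C`
and a left `H`-action `aV` on `V`; its quotient realizes `C ⊗_H V`. -/
def balancer {H C : Type} [AddCommGroup H] [Module k H] [AddCommGroup C] [Module k C]
    (actR : C ⊗[k] H →ₗ[k] C)
    (V : Type) [AddCommGroup V] [Module k V] (aV : H ⊗[k] V →ₗ[k] V) :
    Submodule k (C ⊗[k] V) :=
  Submodule.span k {x | ∃ (c : C) (h : H) (v : V), x = actR (c ⊗ₜ h) ⊗ₜ v - c ⊗ₜ aV (h ⊗ₜ v)}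

/-- The diagonal `H`-action on `U ⊗ V` induced by the comultiplication of `H`. -/
noncomputable def diagAct {H : Type} [Ring H] [Bialgebra k H]
    {U V : Type} [AddCommGroup U] [Module k U] [AddCommGroup V] [Module k V]
    (aU : H ⊗[k] U →ₗ[k] U) (aV : H ⊗[k] V →ₗ[k] V) :
    H ⊗[k] (U ⊗[k] V) →ₗ[k] U ⊗[k] V :=
  (TensorProduct.map aU aV) ∘ₗ (TensorProduct.tensorTensorTensorComm k H H U V).toLinearMap ∘ₗ
    (LinearMap.rTensor (U ⊗[k] V) (comul (R := k) (A := H)))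

/-- The `k`-level comultiplication splitting `c ⊗ (u ⊗ v) ↦ (c₍₁₎ ⊗ u) ⊗ (c₍₂₎ ⊗ v)`. -/
noncomputable def psiPre {C : Type} [AddCommGroup C] [Module k C] [Coalgebra k C]
    (U V : Type) [AddCommGroup U] [Module k U] [AddCommGroup V] [Module k V] :
    C ⊗[k] (U ⊗[k] V) →ₗ[k] (C ⊗[k] U) ⊗[k] (C ⊗[k] V) :=
  (TensorProduct.tensorTensorTensorComm k C C U V).toLinearMap ∘ₗ
    (LinearMap.rTensor (U ⊗[k] V) (comul (R := k) (A := C)))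

/-- `ψ_{U,V}` followed by the projections onto the balanced tensor products. -/
noncomputable def psiRaw {H C : Type} [Ring H] [Bialgebra k H]
    [AddCommGroup C] [Module k C] [Coalgebra k C] (actR : C ⊗[k] H →ₗ[k] C)
    (U V : Type) [AddCommGroup U] [Module k U] [AddCommGroup V] [Module k V]
    (aU : H ⊗[k] U →ₗ[k] U) (aV : H ⊗[k] V →ₗ[k] V) :
    C ⊗[k] (U ⊗[k] V) →ₗ[k]
      ((C ⊗[k] U) ⧸ balancer actR U aU) ⊗[k] ((C ⊗[k] V) ⧸ balancer actR V aV) :=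
  (TensorProduct.map (balancer actR U aU).mkQ (balancer actR V aV).mkQ) ∘ₗ psiPre U V

/-- The action of a bialgebra on the base ring `k` through its counit, `h ⊗ λ ↦ ε(h)λ`. -/
noncomputable def counitAct (H : Type) [Ring H] [Bialgebra k H] : H ⊗[k] k →ₗ[k] k :=
  (TensorProduct.lid k k).toLinearMap ∘ₗ LinearMap.rTensor k (counit (R := k) (A := H))

/-- The `k`-level counit map `ψ₀ : C ⊗ k → k`, `c ⊗ λ ↦ ε(c)λ`. -/
noncomputable def psi0Raw {C : Type} [AddCommGroup C] [Module k C] [Coalgebra k C] :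
    C ⊗[k] k →ₗ[k] k :=
  (TensorProduct.lid k k).toLinearMap ∘ₗ LinearMap.rTensor k (counit (R := k) (A := C))

/-- The action of `K` on `C ⊗ U` through the `C`-factor, as a `k`-linear map. -/
noncomputable def srcAct {K C : Type} [AddCommGroup K] [Module k K]
    [AddCommGroup C] [Module k C] (actL : K ⊗[k] C →ₗ[k] C)
    (U : Type) [AddCommGroup U] [Module k U] :
    K ⊗[k] (C ⊗[k] U) →ₗ[k] C ⊗[k] U :=
  (LinearMap.rTensor U actL) ∘ₗ (TensorProduct.assoc k K C U).symm.toLinearMap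


section Helpers

lemma mkQ_bal {H C : Type} [AddCommGroup H] [Module k H] [AddCommGroup C] [Module k C]
    (actR : C ⊗[k] H →ₗ[k] C) {V : Type} [AddCommGroup V] [Module k V]
    (aV : H ⊗[k] V →ₗ[k] V) (c : C) (h : H) (v : V) :
    (balancer actR V aV).mkQ (actR (c ⊗ₜ h) ⊗ₜ v)
      = (balancer actR V aV).mkQ (c ⊗ₜ aV (h ⊗ₜ v)) := by
  rw [Submodule.mkQ_apply, Submodule.mkQ_apply, Submodule.Quotient.eq]
  exact Submodule.subset_span ⟨c, h, v, rfl⟩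

end Helpers

set_option maxHeartbeats 4000000 in
set_option synthInstance.maxHeartbeats 400000 in
/-- For bialgebras `H, K` and a `(K,H)`-bimodule coalgebra `C`, the (cokernel) functor
`E = C ⊗_H − : H-Mod → K-Mod` is op-monoidal with structure maps
`ψ_{U,V}(c ⊗_H (u ⊗ v)) = (c₍₁₎ ⊗_H u) ⊗ (c₍₂₎ ⊗_H v)` and `ψ₀(c ⊗_H λ) = ε(c)λ`:
these maps are well defined on the balanced tensor products, are `K`-linear natural
transformations, and satisfy the op-monoidal coherence conditions. -/
theorem cotensorFunctor_opMonoidal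
    {H : Type} [Ring H] [Bialgebra k H]
    {K : Type} [Ring K] [Bialgebra k K]
    {C : Type} [AddCommGroup C] [Module k C] [Coalgebra k C]
    (actL : K ⊗[k] C →ₗ[k] C) (actR : C ⊗[k] H →ₗ[k] C)
    -- `C` is a `(K,H)`-bimodule coalgebra
    (hactLone : ∀ c : C, actL (1 ⊗ₜ c) = c)
    (hactLmul : ∀ (x y : K) (c : C), actL ((x * y) ⊗ₜ c) = actL (x ⊗ₜ actL (y ⊗ₜ c)))
    (hactRone : ∀ c : C, actR (c ⊗ₜ 1) = c)
    (hactRmul : ∀ (c : C) (g h : H), actR (c ⊗ₜ (g * h)) = actR (actR (c ⊗ₜ g) ⊗ₜ h))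
    (hbimod : ∀ (x : K) (c : C) (h : H), actL (x ⊗ₜ actR (c ⊗ₜ h)) = actR (actL (x ⊗ₜ c) ⊗ₜ h))
    (hmeasL : ∀ (x : K) (c : C), comul (R := k) (actL (x ⊗ₜ c))
        = (TensorProduct.map actL actL) ((TensorProduct.tensorTensorTensorComm k K K C C).toLinearMap
            (comul (R := k) x ⊗ₜ comul (R := k) c)))
    (hmeasR : ∀ (c : C) (h : H), comul (R := k) (actR (c ⊗ₜ h))
        = (TensorProduct.map actR actR) ((TensorProduct.tensorTensorTensorComm k C C H H).toLinearMap
            (comul (R := k) c ⊗ₜ comul (R := k) h)))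
    (hcounitL : ∀ (x : K) (c : C),
        counit (R := k) (actL (x ⊗ₜ c)) = counit (R := k) x * counit (R := k) c)
    (hcounitR : ∀ (c : C) (h : H),
        counit (R := k) (actR (c ⊗ₜ h)) = counit (R := k) c * counit (R := k) h) :
    -- (1) `ψ_{U,V}` is well defined on `C ⊗_H (U ⊗ V)`
    (∀ (U : Type) [AddCommGroup U] [Module k U] (aU : H ⊗[k] U →ₗ[k] U),
      (∀ u : U, aU (1 ⊗ₜ u) = u) →
      (∀ (g h : H) (u : U), aU ((g * h) ⊗ₜ u) = aU (g ⊗ₜ aU (h ⊗ₜ u))) →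
      ∀ (V : Type) [AddCommGroup V] [Module k V] (aV : H ⊗[k] V →ₗ[k] V),
      (∀ v : V, aV (1 ⊗ₜ v) = v) →
      (∀ (g h : H) (v : V), aV ((g * h) ⊗ₜ v) = aV (g ⊗ₜ aV (h ⊗ₜ v))) →
      balancer actR (U ⊗[k] V) (diagAct aU aV) ≤ LinearMap.ker (psiRaw actR U V aU aV)) ∧
    -- (2) `ψ₀` is well defined on `C ⊗_H k`
    (balancer actR k (counitAct H) ≤ LinearMap.ker (psi0Raw (C := C))) ∧
    -- (3) `ψ_{U,V}` is `K`-linear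
    (∀ (U : Type) [AddCommGroup U] [Module k U] (aU : H ⊗[k] U →ₗ[k] U)
      (V : Type) [AddCommGroup V] [Module k V] (aV : H ⊗[k] V →ₗ[k] V),
      psiRaw actR U V aU aV ∘ₗ srcAct actL (U ⊗[k] V)
        = (TensorProduct.map (balancer actR U aU).mkQ (balancer actR V aV).mkQ) ∘ₗ
          (TensorProduct.map (srcAct actL U) (srcAct actL V)) ∘ₗ
          (TensorProduct.tensorTensorTensorComm k K K (C ⊗[k] U) (C ⊗[k] V)).toLinearMap ∘ₗ
          (LinearMap.rTensor ((C ⊗[k] U) ⊗[k] (C ⊗[k] V)) (comul (R := k) (A := K))) ∘ₗ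
          (LinearMap.lTensor K (psiPre U V))) ∧
    -- (4) `ψ₀` is `K`-linear
    (psi0Raw (C := C) ∘ₗ srcAct actL k
        = counitAct K ∘ₗ LinearMap.lTensor K (psi0Raw (C := C))) ∧
    -- (5) naturality of `ψ` in `U` and `V`
    (∀ (U : Type) [AddCommGroup U] [Module k U] (aU : H ⊗[k] U →ₗ[k] U)
      (V : Type) [AddCommGroup V] [Module k V] (aV : H ⊗[k] V →ₗ[k] V)
      (U' : Type) [AddCommGroup U'] [Module k U'] (aU' : H ⊗[k] U' →ₗ[k] U')
      (V' : Type) [AddCommGroup V'] [Module k V'] (aV' : H ⊗[k] V' →ₗ[k] V')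
      (f : U →ₗ[k] U') (g : V →ₗ[k] V'),
      (∀ (h : H) (u : U), f (aU (h ⊗ₜ u)) = aU' (h ⊗ₜ f u)) →
      (∀ (h : H) (v : V), g (aV (h ⊗ₜ v)) = aV' (h ⊗ₜ g v)) →
      psiRaw actR U' V' aU' aV' ∘ₗ (LinearMap.lTensor C (TensorProduct.map f g))
        = (TensorProduct.map
            ((balancer actR U' aU').mkQ ∘ₗ LinearMap.lTensor C f)
            ((balancer actR V' aV').mkQ ∘ₗ LinearMap.lTensor C g)) ∘ₗ psiPre U V) ∧
    -- (6) op-monoidal associativity coherence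
    (∀ (U : Type) [AddCommGroup U] [Module k U] (aU : H ⊗[k] U →ₗ[k] U)
      (V : Type) [AddCommGroup V] [Module k V] (aV : H ⊗[k] V →ₗ[k] V)
      (W : Type) [AddCommGroup W] [Module k W] (aW : H ⊗[k] W →ₗ[k] W),
      (TensorProduct.map (psiRaw actR U V aU aV) (balancer actR W aW).mkQ) ∘ₗ
          psiPre (U ⊗[k] V) W
        = (TensorProduct.assoc k ((C ⊗[k] U) ⧸ balancer actR U aU)
              ((C ⊗[k] V) ⧸ balancer actR V aV)
              ((C ⊗[k] W) ⧸ balancer actR W aW)).symm.toLinearMap ∘ₗ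
          (TensorProduct.map (balancer actR U aU).mkQ (psiRaw actR V W aV aW)) ∘ₗ
          psiPre U (V ⊗[k] W) ∘ₗ
          (LinearMap.lTensor C (TensorProduct.assoc k U V W).toLinearMap)) ∧
    -- (7) left unit coherence
    (∀ (V : Type) [AddCommGroup V] [Module k V] (aV : H ⊗[k] V →ₗ[k] V),
      (balancer actR V aV).mkQ ∘ₗ (LinearMap.lTensor C (TensorProduct.lid k V).toLinearMap)
        = (TensorProduct.lid k ((C ⊗[k] V) ⧸ balancer actR V aV)).toLinearMap ∘ₗ
          (TensorProduct.map (psi0Raw (C := C)) (balancer actR V aV).mkQ) ∘ₗ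
          psiPre k V) ∧
    -- (8) right unit coherence
    (∀ (V : Type) [AddCommGroup V] [Module k V] (aV : H ⊗[k] V →ₗ[k] V),
      (balancer actR V aV).mkQ ∘ₗ (LinearMap.lTensor C (TensorProduct.rid k V).toLinearMap)
        = (TensorProduct.rid k ((C ⊗[k] V) ⧸ balancer actR V aV)).toLinearMap ∘ₗ
          (TensorProduct.map (balancer actR V aV).mkQ (psi0Raw (C := C))) ∘ₗ
          psiPre V k) := by
  refine ⟨?part1, ?part2, ?part3, ?part4, ?part5, ?part6, ?part7, ?part8⟩
  case part1 =>
    intro U _ _ aU hU1 hUm V _ _ aV hV1 hVm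
    show Submodule.span k _ ≤ _
    refine Submodule.span_le.2 ?_
    rintro x ⟨c, h, t, rfl⟩
    simp only [SetLike.mem_coe, LinearMap.mem_ker, map_sub, sub_eq_zero]
    induction t using TensorProduct.induction_on with
    | zero => simp
    | add a b ha hb => simp only [tmul_add, map_add, ha, hb]
    | tmul u v =>
      have rc := Coalgebra.Repr.arbitrary k c
      have rh := Coalgebra.Repr.arbitrary k h
      show (TensorProduct.map (balancer actR U aU).mkQ (balancer actR V aV).mkQ)
          ((TensorProduct.tensorTensorTensorComm k C C U V)
            ((comul (R := k) (actR (c ⊗ₜ h))) ⊗ₜ (u ⊗ₜ v)))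
        = (TensorProduct.map (balancer actR U aU).mkQ (balancer actR V aV).mkQ)
          ((TensorProduct.tensorTensorTensorComm k C C U V)
            ((comul (R := k) c) ⊗ₜ (diagAct aU aV (h ⊗ₜ (u ⊗ₜ v)))))
      rw [hmeasR c h]
      rw [show diagAct aU aV (h ⊗ₜ (u ⊗ₜ v))
          = TensorProduct.map aU aV ((TensorProduct.tensorTensorTensorComm k H H U V)
              ((comul (R := k) h) ⊗ₜ (u ⊗ₜ v))) from rfl]
      rw [← rc.eq, ← rh.eq]
      simp only [sum_tmul, tmul_sum, map_sum, TensorProduct.tensorTensorTensorComm_tmul,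
        TensorProduct.map_tmul, LinearEquiv.coe_coe]
      refine Finset.sum_congr rfl fun i _ => Finset.sum_congr rfl fun j _ => ?_
      rw [mkQ_bal, mkQ_bal]
  case part2 =>
    unfold balancer
    refine Submodule.span_le.2 ?_
    rintro x ⟨c, h, lam, rfl⟩
    simp only [SetLike.mem_coe, LinearMap.mem_ker, map_sub, sub_eq_zero]
    simp [psi0Raw, counitAct, hcounitR, smul_eq_mul, mul_assoc, mul_comm, mul_left_comm]
  case part3 =>
    intro U _ _ aU V _ _ aV
    ext x c u v
    have rx := Coalgebra.Repr.arbitrary k x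
    have rc := Coalgebra.Repr.arbitrary k c
    simp only [TensorProduct.AlgebraTensorModule.curry_apply, TensorProduct.curry_apply,
      LinearMap.coe_restrictScalars, LinearMap.coe_comp, Function.comp_apply,
      LinearMap.lTensor_tmul, LinearMap.rTensor_tmul, LinearEquiv.coe_coe,
      psiRaw, psiPre, srcAct, TensorProduct.assoc_symm_tmul, TensorProduct.map_tmul]
    rw [hmeasL x c, ← rx.eq, ← rc.eq]
    simp only [map_sum, sum_tmul, tmul_sum, TensorProduct.tensorTensorTensorComm_tmul,
      TensorProduct.map_tmul, LinearMap.coe_comp, Function.comp_apply, LinearEquiv.coe_coe,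
      TensorProduct.assoc_symm_tmul, LinearMap.rTensor_tmul]
  case part4 =>
    ext x c
    simp [psi0Raw, counitAct, srcAct, hcounitL, smul_eq_mul, mul_assoc]
  case part5 =>
    intro U _ _ aU V _ _ aV U' _ _ aU' V' _ _ aV' f g hf hg
    ext c u v
    have rc := Coalgebra.Repr.arbitrary k c
    simp only [TensorProduct.AlgebraTensorModule.curry_apply, TensorProduct.curry_apply,
      LinearMap.coe_restrictScalars, LinearMap.coe_comp, Function.comp_apply,
      LinearMap.lTensor_tmul, LinearMap.rTensor_tmul, LinearEquiv.coe_coe,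
      psiRaw, psiPre, TensorProduct.map_tmul]
    rw [← rc.eq]
    simp only [map_sum, sum_tmul, TensorProduct.tensorTensorTensorComm_tmul,
      TensorProduct.map_tmul, LinearMap.lTensor_tmul, LinearMap.coe_comp, Function.comp_apply]
  case part6 =>
    intro U _ _ aU V _ _ aV W _ _ aW
    ext c u v w
    have rc := Coalgebra.Repr.arbitrary k c
    have key := Coalgebra.sum_tmul_tmul_eq (R := k) rc
      (fun i => Coalgebra.Repr.arbitrary k (rc.left i))
      (fun i => Coalgebra.Repr.arbitrary k (rc.right i))
    apply_fun (TensorProduct.map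
        ((balancer actR U aU).mkQ ∘ₗ (TensorProduct.mk k C U).flip u)
        (TensorProduct.map
          ((balancer actR V aV).mkQ ∘ₗ (TensorProduct.mk k C V).flip v)
          ((balancer actR W aW).mkQ ∘ₗ (TensorProduct.mk k C W).flip w))) at key
    simp only [map_sum, TensorProduct.map_tmul, LinearMap.coe_comp, Function.comp_apply,
      LinearMap.flip_apply, TensorProduct.mk_apply] at key
    simp only [TensorProduct.AlgebraTensorModule.curry_apply, TensorProduct.curry_apply,
      LinearMap.coe_restrictScalars, LinearMap.coe_comp, Function.comp_apply,
      LinearMap.lTensor_tmul, LinearMap.rTensor_tmul, LinearEquiv.coe_coe,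
      psiRaw, psiPre, TensorProduct.map_tmul, TensorProduct.assoc_tmul]
    rw [← rc.eq]
    simp only [sum_tmul, map_sum, TensorProduct.tensorTensorTensorComm_tmul,
      TensorProduct.map_tmul, LinearMap.coe_comp, Function.comp_apply,
      LinearMap.rTensor_tmul, LinearEquiv.coe_coe]
    apply (TensorProduct.assoc k ((C ⊗[k] U) ⧸ balancer actR U aU)
      ((C ⊗[k] V) ⧸ balancer actR V aV) ((C ⊗[k] W) ⧸ balancer actR W aW)).injective
    simp only [map_sum, LinearEquiv.apply_symm_apply]
    refine Eq.trans (Finset.sum_congr rfl fun i _ => ?_) (Eq.trans key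
      (Finset.sum_congr rfl fun i _ => ?_))
    · rw [← (Coalgebra.Repr.arbitrary k (rc.left i)).eq]
      simp only [sum_tmul, tmul_sum, map_sum, TensorProduct.tensorTensorTensorComm_tmul,
        TensorProduct.map_tmul, TensorProduct.assoc_tmul]
    · rw [← (Coalgebra.Repr.arbitrary k (rc.right i)).eq]
      simp only [sum_tmul, tmul_sum, map_sum, TensorProduct.tensorTensorTensorComm_tmul,
        TensorProduct.map_tmul, TensorProduct.assoc_tmul]
  case part7 =>
    intro V _ _ aV
    ext c s
    have rc := Coalgebra.Repr.arbitrary k c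
    have hc : ∑ i ∈ rc.index, counit (R := k) (rc.left i) • rc.right i = c := by
      have h1 := Coalgebra.sum_counit_tmul_eq (R := k) rc
      apply_fun (TensorProduct.lid k C) at h1
      simp only [map_sum, TensorProduct.lid_tmul, one_smul] at h1
      exact h1
    simp only [TensorProduct.AlgebraTensorModule.curry_apply, TensorProduct.curry_apply,
      LinearMap.coe_restrictScalars, LinearMap.coe_comp, Function.comp_apply,
      LinearMap.lTensor_tmul, LinearMap.rTensor_tmul, LinearEquiv.coe_coe,
      psiPre, psi0Raw, TensorProduct.map_tmul, TensorProduct.lid_tmul]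
    conv_lhs => rw [← hc]
    rw [← rc.eq]
    simp only [map_sum, sum_tmul, smul_tmul', tmul_smul, map_smul,
      TensorProduct.tensorTensorTensorComm_tmul, TensorProduct.map_tmul,
      TensorProduct.lid_tmul, psi0Raw, LinearMap.coe_comp, Function.comp_apply,
      LinearMap.rTensor_tmul, LinearEquiv.coe_coe, smul_smul, one_smul, mul_one,
      smul_eq_mul]
    refine Finset.sum_congr rfl fun i _ => ?_
    rw [← smul_tmul', map_smul]
  case part8 =>
    intro V _ _ aV
    ext c v
    have rc := Coalgebra.Repr.arbitrary k c
    have hc : ∑ i ∈ rc.index, counit (R := k) (rc.right i) • rc.left i = c := by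
      have h1 := Coalgebra.sum_tmul_counit_eq (R := k) rc
      apply_fun (TensorProduct.rid k C) at h1
      simp only [map_sum, TensorProduct.rid_tmul, one_smul] at h1
      exact h1
    simp only [TensorProduct.AlgebraTensorModule.curry_apply, TensorProduct.curry_apply,
      LinearMap.coe_restrictScalars, LinearMap.coe_comp, Function.comp_apply,
      LinearMap.lTensor_tmul, LinearMap.rTensor_tmul, LinearEquiv.coe_coe,
      psiPre, psi0Raw, TensorProduct.map_tmul, TensorProduct.rid_tmul]
    conv_lhs => rw [← hc]
    rw [← rc.eq]
    simp only [map_sum, sum_tmul, smul_tmul', tmul_smul, map_smul,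
      TensorProduct.tensorTensorTensorComm_tmul, TensorProduct.map_tmul,
      TensorProduct.rid_tmul, psi0Raw, LinearMap.coe_comp, Function.comp_apply,
      LinearMap.rTensor_tmul, LinearEquiv.coe_coe, smul_smul, one_smul, mul_one,
      smul_eq_mul]
    refine Finset.sum_congr rfl fun i _ => ?_
    rw [← smul_tmul', map_smul, TensorProduct.lid_tmul, smul_eq_mul, mul_one]
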